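/- Bounded-buffer soundness check: if during any execution of the transformed program each per-address buffer never holds more than 2 pending writes (the bound-check assertions never fail), then the bounded-buffer transformed program and the unbounded-buffer transformed program have the same reachable states. -/

import Mathlib

/-!
The bounded system simulates the unbounded one step by step, diverting to the error state
exactly when the target state violates the bound. Hence every bounded run projects to an
unbounded one, and, as long as the error state is unreachable, every unbounded run lifts to a
bounded one, all of whose states satisfy the bound.
-/

open Relation

section GuardedStep

variable {S : Type*} {step : S → S → Prop} {ok : S → Prop}

def guardedStep (step : S → S → Prop) (ok : S → Prop) (x y : Option S) : Prop :=
  ∃ s s', x = some s ∧ step s s' ∧ ((ok s' ∧ y = some s') ∨ (¬ ok s' ∧ y = none))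

theorem ok_of_guardedStep {x : Option S} {b : S} (h : guardedStep step ok x (some b)) : ok b := by
  obtain ⟨_, _, -, -, ⟨hok, hb⟩ | ⟨-, hnone⟩⟩ := h
  · cases hb
    exact hok
  · cases hnone

theorem exists_step_of_guardedStep {x : Option S} {b : S}
    (h : guardedStep step ok x (some b)) : ∃ a ∈ x, step a b := by
  obtain ⟨a, _, rfl, hstep, ⟨-, hb⟩ | ⟨-, hnone⟩⟩ := h
  · cases hb
    exact ⟨a, rfl, hstep⟩
  · cases hnone

theorem guardedStep_some_or_none {a b : S} (h : step a b) :
    guardedStep step ok (some a) (some b) ∨ guardedStep step ok (some a) none := by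
  by_cases hb : ok b
  · exact .inl ⟨a, b, rfl, h, .inl ⟨hb, rfl⟩⟩
  · exact .inr ⟨a, b, rfl, h, .inr ⟨hb, rfl⟩⟩

theorem ok_of_reflTransGen_guardedStep {a b : S} (ha : ok a)
    (h : ReflTransGen (guardedStep step ok) (some a) (some b)) : ok b := by
  rcases h.cases_tail with hba | ⟨_, -, hlast⟩
  · exact Option.some_injective _ hba ▸ ha
  · exact ok_of_guardedStep hlast

theorem reflTransGen_of_reflTransGen_guardedStep {a : S} {x : Option S}
    (h : ReflTransGen (guardedStep step ok) (some a) x) : ∀ b ∈ x, ReflTransGen step a b := by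
  induction h with
  | refl => rintro b ⟨⟩; exact .refl
  | tail _ hlast ih =>
    rintro b ⟨⟩
    obtain ⟨c, hc, hcb⟩ := exists_step_of_guardedStep hlast
    exact (ih c hc).tail hcb

theorem reflTransGen_guardedStep_of_reflTransGen {a b : S}
    (hnoerr : ¬ ReflTransGen (guardedStep step ok) (some a) none)
    (h : ReflTransGen step a b) : ReflTransGen (guardedStep step ok) (some a) (some b) := by
  induction h with
  | refl => exact .refl
  | tail _ hlast ih =>
    rcases guardedStep_some_or_none (ok := ok) hlast with hsome | hnone
    · exact ih.tail hsome
    · exact absurd (ih.tail hnone) hnoerr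

end GuardedStep

theorem bounded_buffer_soundness_general {S : Type*}
    (step : S → S → Prop)              -- unbounded semantics
    (init : S)
    (ok : S → Prop)
    (hinit : ok init)
    -- bounded semantics on Option S, with none the error state
    (stepB : Option S → Option S → Prop)
    (hstepB : ∀ x y, stepB x y ↔
      ∃ s s', x = some s ∧ step s s' ∧ ((ok s' ∧ y = some s') ∨ (¬ ok s' ∧ y = none)))
    -- the bound-check assertions never fail: the error state is unreachable
    (hnoerr : ¬ Relation.ReflTransGen stepB (some init) none) :
    (∀ s, Relation.ReflTransGen stepB (some init) (some s) ↔
      Relation.ReflTransGen step init s) ∧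
    (∀ s, Relation.ReflTransGen step init s → ok s) := by
  obtain rfl : stepB = guardedStep step ok := funext₂ fun x y => propext (hstepB x y)
  have lift : ∀ s, ReflTransGen step init s →
      ReflTransGen (guardedStep step ok) (some init) (some s) :=
    fun _ => reflTransGen_guardedStep_of_reflTransGen hnoerr
  exact ⟨fun s => ⟨fun h => reflTransGen_of_reflTransGen_guardedStep h s rfl, lift s⟩,
    fun s h => ok_of_reflTransGen_guardedStep hinit (lift s h)⟩

/-- bounded-buffer soundness. If the error state (reached when a
push would exceed the buffer capacity 2) is unreachable in the bounded system,
then the bounded and unbounded transformed programs have the same reachable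
states (all of which keep every per-address buffer at length ≤ 2). -/
theorem bounded_buffer_soundness {S : Type*}
    (step : S → S → Prop)              -- unbounded semantics
    (bufLen : S → ℕ → ℕ)               -- per-address buffer length
    (init : S)
    (ok : S → Prop)
    (hok : ∀ s, ok s ↔ ∀ ℓ, bufLen s ℓ ≤ 2)
    (hinit : ok init)
    -- bounded semantics on Option S, with none the error state
    (stepB : Option S → Option S → Prop)
    (hstepB : ∀ x y, stepB x y ↔
      ∃ s s', x = some s ∧ step s s' ∧ ((ok s' ∧ y = some s') ∨ (¬ ok s' ∧ y = none)))
    -- the bound-check assertions never fail: the error state is unreachable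
    (hnoerr : ¬ Relation.ReflTransGen stepB (some init) none) :
    (∀ s, Relation.ReflTransGen stepB (some init) (some s) ↔
      Relation.ReflTransGen step init s) ∧
    (∀ s, Relation.ReflTransGen step init s → ok s) :=
  bounded_buffer_soundness_general step init ok hinit stepB hstepB hnoerr
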